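/- arXiv:1010.2187 — 4 statements merged into one kernel-verified Lean document; each statement's English description precedes it below -/
import Mathlib

section
/- Let N be a nilpotent n×n matrix over ℂ and let A be a symmetric n×n matrix over ℂ. Then exp(N) · A · (exp(N))ᵀ = A if and only if N·A + A·Nᵀ = 0. -/
/-!
Let `T X = N X + X Nᵀ`. Left multiplication by `N` and right multiplication by `Nᵀ` are commuting
nilpotent operators, so `exp T X = exp N * X * exp Nᵀ` and the claim becomes
`exp T A = A ↔ T A = 0`. For nilpotent `T` one has `exp T - 1 = u * T` with
`u = ∑ T ^ i / (i + 1)!` a unit (it is `1` plus a nilpotent), so `exp T - 1` and `T` have the same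
kernel.
-/

open Matrix Finset
open scoped Nat

namespace IsNilpotent

variable {A : Type*} [Ring A] [Algebra ℚ A]

theorem exp_sub_one_eq_sum_mul {a : A} {k : ℕ} (h : a ^ k = 0) :
    exp a - 1 = (∑ i ∈ range k, ((i + 1)! : ℚ)⁻¹ • a ^ i) * a := by
  rw [exp_eq_sum (pow_eq_zero_of_le k.le_succ h), sum_range_succ', sum_mul]
  simp_rw [smul_mul_assoc, ← _root_.pow_succ]
  simp

theorem exists_isUnit_exp_sub_one_eq_mul {a : A} (ha : IsNilpotent a) :
    ∃ u : A, IsUnit u ∧ exp a - 1 = u * a := by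
  obtain ⟨k, hk⟩ := ha
  refine ⟨_, ?_, exp_sub_one_eq_sum_mul (pow_eq_zero_of_le k.le_succ hk)⟩
  set v := ∑ i ∈ range k, ((i + 2)! : ℚ)⁻¹ • a ^ i
  have hv : Commute v a := Commute.sum_left _ _ _ fun i _ => (Commute.pow_self a i).smul_left _
  have hu : ∑ i ∈ range (k + 1), ((i + 1)! : ℚ)⁻¹ • a ^ i = v * a + 1 := by
    rw [sum_range_succ', sum_mul]
    simp_rw [smul_mul_assoc, ← _root_.pow_succ]
    simp
  rw [hu]
  exact (hv.isNilpotent_mul_left ⟨k, hk⟩).isUnit_add_one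

end IsNilpotent

theorem Module.End.exp_apply_eq_self_iff {M : Type*} [AddCommGroup M] [Module ℚ M]
    {f : Module.End ℚ M} (hf : IsNilpotent f) (x : M) :
    IsNilpotent.exp f x = x ↔ f x = 0 := by
  obtain ⟨u, hu, h⟩ := hf.exists_isUnit_exp_sub_one_eq_mul
  have hx : IsNilpotent.exp f x - x = u (f x) := by simpa using congr($h x)
  rw [← sub_eq_zero, hx, map_eq_zero_iff _ ((Module.End.isUnit_iff u).1 hu).injective]

theorem NormedSpace.exp_eq_isNilpotent_exp {𝔸 : Type*} [Ring 𝔸] [Algebra ℚ 𝔸]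
    [TopologicalSpace 𝔸] [IsTopologicalRing 𝔸] {a : 𝔸} (ha : IsNilpotent a) :
    NormedSpace.exp a = IsNilpotent.exp a := by
  obtain ⟨k, hk⟩ := ha
  rw [exp_eq_tsum_rat, IsNilpotent.exp_eq_sum hk]
  exact tsum_eq_sum fun i hi => by rw [pow_eq_zero_of_le (by simpa using hi) hk, smul_zero]

namespace LinearMap

variable {A : Type*} [Ring A] [Algebra ℚ A]

theorem exp_mulLeft_apply {a : A} (ha : IsNilpotent a) (x : A) :
    IsNilpotent.exp (mulLeft ℚ a) x = IsNilpotent.exp a * x := by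
  obtain ⟨k, hk⟩ := ha
  rw [IsNilpotent.exp_eq_sum (k := k) (by simp [hk]), IsNilpotent.exp_eq_sum hk]
  simp [sum_mul]

theorem exp_mulRight_apply {a : A} (ha : IsNilpotent a) (x : A) :
    IsNilpotent.exp (mulRight ℚ a) x = x * IsNilpotent.exp a := by
  obtain ⟨k, hk⟩ := ha
  rw [IsNilpotent.exp_eq_sum (k := k) (by simp [hk]), IsNilpotent.exp_eq_sum hk]
  simp [mul_sum]

theorem isNilpotent_mulLeft_add_mulRight {a b : A} (ha : IsNilpotent a) (hb : IsNilpotent b) :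
    IsNilpotent (mulLeft ℚ a + mulRight ℚ b) :=
  (commute_mulLeft_right a b).isNilpotent_add ((isNilpotent_mulLeft_iff ℚ a).2 ha)
    ((isNilpotent_mulRight_iff ℚ b).2 hb)

theorem exp_mulLeft_add_mulRight_apply {a b : A} (ha : IsNilpotent a) (hb : IsNilpotent b)
    (x : A) :
    IsNilpotent.exp (mulLeft ℚ a + mulRight ℚ b) x =
      IsNilpotent.exp a * x * IsNilpotent.exp b := by
  rw [IsNilpotent.exp_add_of_commute (commute_mulLeft_right a b)
    ((isNilpotent_mulLeft_iff ℚ a).2 ha) ((isNilpotent_mulRight_iff ℚ b).2 hb),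
    Module.End.mul_apply, exp_mulRight_apply hb, exp_mulLeft_apply ha, mul_assoc]

end LinearMap

theorem unipotent_fixes_iff_general (n : ℕ) (N A : Matrix (Fin n) (Fin n) ℂ)
    (hN : IsNilpotent N) :
    NormedSpace.exp N * A * (NormedSpace.exp N)ᵀ = A ↔ N * A + A * Nᵀ = 0 := by
  have hNt : IsNilpotent Nᵀ := isNilpotent_transpose_iff.2 hN
  rw [← exp_transpose, NormedSpace.exp_eq_isNilpotent_exp hN,
    NormedSpace.exp_eq_isNilpotent_exp hNt,
    ← LinearMap.exp_mulLeft_add_mulRight_apply hN hNt,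
    Module.End.exp_apply_eq_self_iff (LinearMap.isNilpotent_mulLeft_add_mulRight hN hNt)]
  rfl

/-- A symmetric matrix `A` is fixed by the unipotent element `exp N` (for `N` nilpotent over ℂ)
if and only if `N * A + A * Nᵀ = 0`. -/
theorem unipotent_fixes_iff (n : ℕ) (N A : Matrix (Fin n) (Fin n) ℂ)
    (hN : IsNilpotent N) (hA : A.IsSymm) :
    NormedSpace.exp N * A * (NormedSpace.exp N)ᵀ = A ↔ N * A + A * Nᵀ = 0 :=
  unipotent_fixes_iff_general n N A hN
end

section
/- Let K be a field of characteristic 0 and let N be the n×n nilpotent single Jordan block over K, i.e., the matrix whose (i,j) entry (1-indexed) is 1 if j = i+1 and 0 otherwise. Let m = ⌊(n+1)/2⌋. A symmetric n×n matrix A over K satisfies N·A + A·Nᵀ = 0 if and only if there exist a_1, ..., a_m ∈ K such that for all 1 ≤ i, j ≤ n: the (i,j) entry of A equals (−1)^{i−1}·a_{(i+j)/2} when i+j is even and i+j ≤ n+1, and equals 0 otherwise. -/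
/-!
Pad `A` with zeros to an array `B` indexed by `ℕ × ℕ`. Since `N` shifts rows and `Nᵀ` shifts
columns, `N * A + A * Nᵀ = 0` says exactly `B (i + 1) j = - B i (j + 1)` for all `i, j`, i.e.
`B i j = (-1) ^ i * c (i + j)` with `c = B 0`. Padding forces `c s = 0` for `s ≥ n`, and
symmetry gives `c s = B s 0 = (-1) ^ s * c s`, so `c` vanishes at odd `s` in characteristic
zero. Conversely any such array satisfies the relation.
-/

open Matrix

def singleJordan (K : Type*) [Field K] (n : ℕ) : Matrix (Fin n) (Fin n) K :=
  Matrix.of fun i j => if (j : ℕ) = (i : ℕ) + 1 then 1 else 0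

lemma Fin.sum_ite_val_eq {M : Type*} [AddCommMonoid M] {n : ℕ} (f : Fin n → M) (m : ℕ) :
    (∑ k : Fin n, if (k : ℕ) = m then f k else 0) = if h : m < n then f ⟨m, h⟩ else 0 := by
  split_ifs with h
  · simp [← Fin.ext_iff (b := ⟨m, h⟩)]
  · exact Finset.sum_eq_zero fun k _ => if_neg (by omega)

namespace Matrix

variable {α : Type*} [Zero α] {n : ℕ} (A : Matrix (Fin n) (Fin n) α)

def zeroExtend (i j : ℕ) : α :=
  if h : i < n ∧ j < n then A ⟨i, h.1⟩ ⟨j, h.2⟩ else 0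

@[simp]
lemma zeroExtend_val (i j : Fin n) : A.zeroExtend i j = A i j := by
  simp [zeroExtend]

lemma zeroExtend_of_le_left {i : ℕ} (hi : n ≤ i) (j : ℕ) : A.zeroExtend i j = 0 :=
  dif_neg fun h => by omega

lemma zeroExtend_of_le_right (i : ℕ) {j : ℕ} (hj : n ≤ j) : A.zeroExtend i j = 0 :=
  dif_neg fun h => by omega

lemma IsSymm.zeroExtend_comm {A : Matrix (Fin n) (Fin n) α} (hA : A.IsSymm) (i j : ℕ) :
    A.zeroExtend i j = A.zeroExtend j i := by
  unfold zeroExtend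
  by_cases h : i < n ∧ j < n
  · rw [dif_pos h, dif_pos h.symm, hA.apply]
  · rw [dif_neg h, dif_neg fun h' => h h'.symm]

end Matrix

section SingleJordan

variable {K : Type*} [Field K] {n : ℕ} (A : Matrix (Fin n) (Fin n) K)

lemma singleJordan_mul_apply (i j : Fin n) :
    (singleJordan K n * A) i j = A.zeroExtend (i + 1) j := by
  simp only [mul_apply, singleJordan, of_apply, ite_mul, one_mul, zero_mul, Fin.sum_ite_val_eq]
  simp [zeroExtend]

lemma mul_singleJordan_transpose_apply (i j : Fin n) :
    (A * (singleJordan K n)ᵀ) i j = A.zeroExtend i (j + 1) := by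
  simp only [mul_apply, transpose_apply, singleJordan, of_apply, mul_ite, mul_one, mul_zero,
    Fin.sum_ite_val_eq]
  simp [zeroExtend]

end SingleJordan

def IsSkewHankel {R : Type*} [Ring R] (B : ℕ → ℕ → R) : Prop :=
  ∀ i j, B (i + 1) j + B i (j + 1) = 0

namespace IsSkewHankel

variable {R : Type*} [Ring R] {B : ℕ → ℕ → R}

lemma apply_eq (hB : IsSkewHankel B) (i j : ℕ) : B i j = (-1) ^ i * B 0 (i + j) := by
  induction i generalizing j with
  | zero => simp
  | succ i ih =>
    rw [eq_neg_of_add_eq_zero_left (hB i j), ih (j + 1), pow_succ, Nat.add_right_comm i 1 j,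
      Nat.add_assoc]
    noncomm_ring

lemma of_neg_one_pow_mul (c : ℕ → R) : IsSkewHankel fun i j => (-1) ^ i * c (i + j) := by
  intro i j
  dsimp only
  rw [pow_succ, Nat.add_right_comm, ← Nat.add_assoc]
  noncomm_ring

lemma apply_zero_of_odd [NoZeroDivisors R] [CharZero R] (hB : IsSkewHankel B)
    (hsymm : ∀ i j, B i j = B j i) {s : ℕ} (hs : Odd s) : B 0 s = 0 := by
  have := hB.apply_eq s 0
  rw [← hsymm, hs.neg_one_pow, Nat.add_zero, neg_one_mul] at this
  exact self_eq_neg.mp this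

end IsSkewHankel

lemma singleJordan_mul_add_mul_transpose_eq_zero_iff {K : Type*} [Field K] {n : ℕ}
    (A : Matrix (Fin n) (Fin n) K) :
    singleJordan K n * A + A * (singleJordan K n)ᵀ = 0 ↔ IsSkewHankel A.zeroExtend := by
  simp only [← Matrix.ext_iff, Matrix.add_apply, singleJordan_mul_apply,
    mul_singleJordan_transpose_apply, Matrix.zero_apply]
  refine ⟨fun h i j => ?_, fun h i j => h i j⟩
  by_cases hij : i < n ∧ j < n
  · exact h ⟨i, hij.1⟩ ⟨j, hij.2⟩
  · rcases not_and_or.mp hij with hi | hj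
    · rw [A.zeroExtend_of_le_left (by omega), A.zeroExtend_of_le_left (by omega), add_zero]
    · rw [A.zeroExtend_of_le_right _ (by omega), A.zeroExtend_of_le_right _ (by omega),
        add_zero]

/-- A symmetric matrix `A` satisfies `N * A + A * Nᵀ = 0` for the single Jordan block `N`
iff there are scalars `a_1, …, a_m` (here `a : ℕ → K`, 0-indexed, with only indices
`< m = ⌊(n+1)/2⌋` relevant) such that the 1-indexed `(i, j)` entry of `A` equals
`(-1) ^ (i - 1) * a_{(i+j)/2}` when `i + j` is even and `i + j ≤ n + 1`, and `0` otherwise.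
(0-indexed: entry `(i, j)` equals `(-1) ^ i * a ((i+j)/2 + 1)` when `i + j` is even and
`i + j + 1 ≤ n`.) -/
theorem singleJordan_fixed_form (K : Type*) [Field K] [CharZero K] (n : ℕ)
    (A : Matrix (Fin n) (Fin n) K) (hA : A.IsSymm) :
    singleJordan K n * A + A * (singleJordan K n)ᵀ = 0 ↔
      ∃ a : ℕ → K, ∀ i j : Fin n,
        A i j =
          if Even ((i : ℕ) + (j : ℕ)) ∧ (i : ℕ) + (j : ℕ) + 1 ≤ n then
            (-1 : K) ^ (i : ℕ) * a (((i : ℕ) + (j : ℕ)) / 2 + 1)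
          else 0 := by
  rw [singleJordan_mul_add_mul_transpose_eq_zero_iff]
  constructor
  · intro hB
    refine ⟨fun t => A.zeroExtend 0 (2 * t - 2), fun i j => ?_⟩
    rw [← A.zeroExtend_val, hB.apply_eq, ← mul_ite_zero]
    congr 1
    split_ifs with hs
    · obtain ⟨⟨k, hk⟩, -⟩ := hs
      congr 1
      omega
    · rcases Nat.even_or_odd (i + j) with he | ho
      · exact A.zeroExtend_of_le_right 0 (by have := not_and.mp hs he; omega)
      · exact hB.apply_zero_of_odd hA.zeroExtend_comm ho
  · rintro ⟨a, ha⟩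
    suffices A.zeroExtend = fun i j =>
        (-1) ^ i * if Even (i + j) ∧ i + j + 1 ≤ n then a ((i + j) / 2 + 1) else 0 by
      rw [this]
      exact IsSkewHankel.of_neg_one_pow_mul fun s =>
        if Even s ∧ s + 1 ≤ n then a (s / 2 + 1) else 0
    ext i j
    by_cases hij : i < n ∧ j < n
    · rw [mul_ite_zero, ← ha ⟨i, hij.1⟩ ⟨j, hij.2⟩]
      exact A.zeroExtend_val ⟨i, hij.1⟩ ⟨j, hij.2⟩
    · rw [Matrix.zeroExtend, dif_neg hij, if_neg (by omega), mul_zero]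
end

section
/- A symmetric n×n matrix A over K satisfies N_λ·A + A·N_λᵀ = 0 if and only if for every pair 1 ≤ r ≤ s ≤ k there exist scalars c^{r,s}_1, c^{r,s}_2, ... ∈ K such that the (s_r + p, s_s + q) entry of A (for 1 ≤ p ≤ λ_r, 1 ≤ q ≤ λ_s) equals: when r = s, (−1)^{p−1}·c^{r,r}_{(p+q)/2} if p+q is even and p+q ≤ λ_r + 1, and 0 otherwise; when r < s, (−1)^{p−1}·c^{r,s}_{p+q−1} if p+q−1 ≤ λ_s, and 0 otherwise. (The entries with r > s are determined by symmetry of A.) -/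
/-! Indexing every block from `0`, the equation `N A + A Nᵀ = 0` at entry `(p, q)` of block
`(r, s)` reads `B (p + 1) q + B p (q + 1) = 0`, where `B` is the block extended by zero. By
induction on `p` this forces `B p q = (-1) ^ p * B 0 (p + q)`: each block is an alternating
Hankel matrix whose antidiagonals vanish from `p + q = λ_s` on. On a diagonal block, symmetry
of `A` gives `B 0 m = (-1) ^ m * B 0 m`, which kills the odd antidiagonals since `2 ≠ 0`.
Conversely, such blocks satisfy the recurrence as long as `λ_s ≤ λ_r`, which holds for `r ≤ s`;
the blocks with `r > s` then follow by symmetry. -/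

open Matrix

/-- Partial sum `s_r = λ_1 + ⋯ + λ_{r-1}` (where the parts are `lam 0, lam 1, …`). -/
def psum {k : ℕ} (lam : Fin k → ℕ) (r : Fin k) : ℕ :=
  ∑ t ∈ Finset.univ.filter (fun t => t < r), lam t

/-- The `n × n` nilpotent Jordan matrix of type `λ`: its 1-indexed `(i, j)` entry is `1`
if `j = i + 1` and `s_r < i < i + 1 ≤ s_r + λ_r` for some `r`, and `0` otherwise
(here written with 0-indexed `i`, `j`). -/
def jordanNilpotent (K : Type*) [Field K] (n k : ℕ) (lam : Fin k → ℕ) :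
    Matrix (Fin n) (Fin n) K :=
  Matrix.of fun i j =>
    if (j : ℕ) = (i : ℕ) + 1 ∧
        ∃ r : Fin k, psum lam r ≤ (i : ℕ) ∧ (i : ℕ) + 2 ≤ psum lam r + lam r
      then 1 else 0

theorem psum_add_lt {n k : ℕ} (lam : Fin k → ℕ) (hn : ∑ r, lam r = n) (r : Fin k)
    (p : ℕ) (hp : p < lam r) : psum lam r + p < n := by
  have h1 : lam r + psum lam r ≤ ∑ t, lam t := by
    rw [psum, ← Finset.sum_insert (by simp)]
    exact Finset.sum_le_sum_of_subset (Finset.subset_univ _)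
  omega

/-- The index in `Fin n` of the `p`-th position (0-indexed) of the `r`-th block. -/
def blockIdx {n k : ℕ} (lam : Fin k → ℕ) (hn : ∑ r, lam r = n) (r : Fin k) (p : ℕ)
    (hp : p < lam r) : Fin n :=
  ⟨psum lam r + p, psum_add_lt lam hn r p hp⟩

section AlternatingHankel

variable {R : Type*} [Ring R] {a b : ℕ} {f : ℕ → ℕ → R}

theorem eq_neg_one_pow_mul_of_add_eq_zero (hfb : ∀ p q, b ≤ q → f p q = 0)
    (hrec : ∀ p q, p < a → q < b → f (p + 1) q + f p (q + 1) = 0) :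
    ∀ p ≤ a, ∀ q, f p q = (-1) ^ p * f 0 (p + q) := by
  intro p
  induction p with
  | zero => simp
  | succ p ih =>
    intro hp q
    rcases lt_or_ge q b with hq | hq
    · have hstep := ih (by omega) (q + 1)
      rw [show p + (q + 1) = p + 1 + q by omega] at hstep
      rw [eq_neg_of_add_eq_zero_left (hrec p q (by omega) hq), hstep, pow_succ, mul_neg_one,
        neg_mul]
    · rw [hfb _ _ hq, hfb _ _ (by omega), mul_zero]

theorem eq_zero_of_odd_of_add_eq_zero [NoZeroDivisors R] [CharZero R]
    (hfa : ∀ p q, a ≤ q → f p q = 0)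
    (hrec : ∀ p q, p < a → q < a → f (p + 1) q + f p (q + 1) = 0)
    (hsymm : ∀ m, f m 0 = f 0 m) {m : ℕ} (hm : Odd m) : f 0 m = 0 := by
  rcases lt_or_ge m a with hma | hma
  · have h := eq_neg_one_pow_mul_of_add_eq_zero hfa hrec m hma.le 0
    rw [hsymm, hm.neg_one_pow, add_zero, neg_one_mul] at h
    exact self_eq_neg.mp h
  · exact hfa 0 m hma

theorem add_eq_zero_of_eq_neg_one_pow_mul (hba : b ≤ a) (hfa : ∀ p q, a ≤ p → f p q = 0)
    (hfb : ∀ p q, b ≤ q → f p q = 0) {g : ℕ → R} (hg : ∀ m, b ≤ m → g m = 0)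
    (hfg : ∀ p q, p < a → q < b → f p q = (-1) ^ p * g (p + q)) :
    ∀ p q, p < a → q < b → f (p + 1) q + f p (q + 1) = 0 := by
  have hfg' : ∀ p q, p ≤ a → q ≤ b → f p q = (-1) ^ p * g (p + q) := by
    intro p q hp hq
    rcases hp.lt_or_eq with hp | rfl
    · rcases hq.lt_or_eq with hq | rfl
      · exact hfg p q hp hq
      · rw [hfb _ _ le_rfl, hg _ (by omega), mul_zero]
    · rw [hfa _ _ le_rfl, hg _ (by omega), mul_zero]
  intro p q hp hq
  rw [hfg' _ _ hp hq.le, hfg' _ _ hp.le hq, show p + (q + 1) = p + 1 + q by omega, pow_succ,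
    mul_neg_one, neg_mul, neg_add_cancel]

end AlternatingHankel

section Blocks

variable {n k : ℕ} (lam : Fin k → ℕ) (hn : ∑ r, lam r = n)

theorem psum_add_le_psum {r s : Fin k} (h : r < s) : psum lam r + lam r ≤ psum lam s := by
  rw [psum, psum, add_comm, ← Finset.sum_insert (by simp)]
  refine Finset.sum_le_sum_of_subset fun t ht => ?_
  simp only [Finset.mem_insert, Finset.mem_filter, Finset.mem_univ, true_and] at ht ⊢
  rcases ht with rfl | ht
  exacts [h, ht.trans h]

variable {lam} in
theorem eq_of_psum_add_eq {r s : Fin k} {p q : ℕ} (hp : p < lam r) (hq : q < lam s)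
    (h : psum lam r + p = psum lam s + q) : r = s := by
  rcases lt_trichotomy r s with hrs | hrs | hrs
  · have := psum_add_le_psum lam hrs; omega
  · exact hrs
  · have := psum_add_le_psum lam hrs; omega

theorem exists_blockIdx_eq (i : Fin n) :
    ∃ r p, ∃ hp : p < lam r, blockIdx lam hn r p hp = i := by
  let idx : (Σ r : Fin k, Fin (lam r)) → Fin n := fun x => blockIdx lam hn x.1 x.2 x.2.2
  have hinj : Function.Injective idx := by
    rintro ⟨r, p, hp⟩ ⟨s, q, hq⟩ h
    have h' : psum lam r + p = psum lam s + q := congrArg Fin.val h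
    obtain rfl := eq_of_psum_add_eq hp hq h'
    obtain rfl : p = q := by omega
    rfl
  have hbij := (Fintype.bijective_iff_injective_and_card idx).2 ⟨hinj, by simp [hn]⟩
  obtain ⟨⟨r, p, hp⟩, h⟩ := hbij.2 i
  exact ⟨r, p, hp, h⟩

end Blocks

section BlockEntry

variable {R : Type*} [Zero R] {n k : ℕ} (lam : Fin k → ℕ) (hn : ∑ r, lam r = n)

def blockEntry (A : Matrix (Fin n) (Fin n) R) (r s : Fin k) (p q : ℕ) : R :=
  if h : p < lam r ∧ q < lam s then A (blockIdx lam hn r p h.1) (blockIdx lam hn s q h.2) else 0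

variable {A : Matrix (Fin n) (Fin n) R} {r s : Fin k} {p q : ℕ}

theorem blockEntry_of_lt (hp : p < lam r) (hq : q < lam s) :
    blockEntry lam hn A r s p q = A (blockIdx lam hn r p hp) (blockIdx lam hn s q hq) :=
  dif_pos ⟨hp, hq⟩

theorem blockEntry_of_le_left (hp : lam r ≤ p) : blockEntry lam hn A r s p q = 0 :=
  dif_neg fun h => (h.1.trans_le hp).false

theorem blockEntry_of_le_right (hq : lam s ≤ q) : blockEntry lam hn A r s p q = 0 :=
  dif_neg fun h => (h.2.trans_le hq).false

theorem blockEntry_comm (hA : A.IsSymm) :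
    blockEntry lam hn A s r q p = blockEntry lam hn A r s p q := by
  unfold blockEntry
  by_cases h : p < lam r ∧ q < lam s
  · rw [dif_pos h.symm, dif_pos h, hA.apply]
  · rw [dif_neg (mt And.symm h), dif_neg h]

end BlockEntry

section JordanNilpotent

variable {K : Type*} [Field K] {n k : ℕ} (lam : Fin k → ℕ) (hn : ∑ r, lam r = n)
  {r s : Fin k} {p q : ℕ}

theorem jordanNilpotent_blockIdx_apply (hp : p < lam r) (j : Fin n) :
    jordanNilpotent K n k lam (blockIdx lam hn r p hp) j =
      if h : p + 1 < lam r then (if j = blockIdx lam hn r (p + 1) h then 1 else 0) else 0 := by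
  have hrow : (∃ r' : Fin k, psum lam r' ≤ psum lam r + p ∧
      psum lam r + p + 2 ≤ psum lam r' + lam r') ↔ p + 1 < lam r := by
    constructor
    · rintro ⟨r', h₁, h₂⟩
      obtain rfl : r' = r := eq_of_psum_add_eq (p := psum lam r + p - psum lam r') (by omega) hp
        (by omega)
      omega
    · exact fun h => ⟨r, by omega, by omega⟩
  simp only [jordanNilpotent, Matrix.of_apply, blockIdx, hrow]
  split_ifs <;> simp_all [Fin.ext_iff, add_assoc]

theorem jordanNilpotent_mul_blockIdx_apply (A : Matrix (Fin n) (Fin n) K) (hp : p < lam r)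
    (j : Fin n) :
    (jordanNilpotent K n k lam * A) (blockIdx lam hn r p hp) j =
      if h : p + 1 < lam r then A (blockIdx lam hn r (p + 1) h) j else 0 := by
  simp only [Matrix.mul_apply, jordanNilpotent_blockIdx_apply]
  split_ifs <;> simp

theorem mul_jordanNilpotent_transpose_apply_blockIdx (A : Matrix (Fin n) (Fin n) K)
    (i : Fin n) (hq : q < lam s) :
    (A * (jordanNilpotent K n k lam)ᵀ) i (blockIdx lam hn s q hq) =
      if h : q + 1 < lam s then A i (blockIdx lam hn s (q + 1) h) else 0 := by
  simp only [Matrix.mul_apply, Matrix.transpose_apply, jordanNilpotent_blockIdx_apply]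
  split_ifs <;> simp

theorem jordanNilpotent_commutator_apply_blockIdx (A : Matrix (Fin n) (Fin n) K)
    (hp : p < lam r) (hq : q < lam s) :
    (jordanNilpotent K n k lam * A + A * (jordanNilpotent K n k lam)ᵀ)
        (blockIdx lam hn r p hp) (blockIdx lam hn s q hq) =
      blockEntry lam hn A r s (p + 1) q + blockEntry lam hn A r s p (q + 1) := by
  rw [Matrix.add_apply, jordanNilpotent_mul_blockIdx_apply,
    mul_jordanNilpotent_transpose_apply_blockIdx]
  congr 1
  · split_ifs with h
    · rw [blockEntry_of_lt lam hn h hq]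
    · rw [blockEntry_of_le_left lam hn (not_lt.1 h)]
  · split_ifs with h
    · rw [blockEntry_of_lt lam hn hp h]
    · rw [blockEntry_of_le_right lam hn (not_lt.1 h)]

theorem jordanNilpotent_commutator_eq_zero_iff (A : Matrix (Fin n) (Fin n) K) :
    jordanNilpotent K n k lam * A + A * (jordanNilpotent K n k lam)ᵀ = 0 ↔
      ∀ r s p q, p < lam r → q < lam s →
        blockEntry lam hn A r s (p + 1) q + blockEntry lam hn A r s p (q + 1) = 0 := by
  constructor
  · intro h r s p q hp hq
    rw [← jordanNilpotent_commutator_apply_blockIdx lam hn A hp hq, h, Matrix.zero_apply]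
  · intro h
    ext i j
    obtain ⟨r, p, hp, rfl⟩ := exists_blockIdx_eq lam hn i
    obtain ⟨s, q, hq, rfl⟩ := exists_blockIdx_eq lam hn j
    rw [jordanNilpotent_commutator_apply_blockIdx lam hn A hp hq, h r s p q hp hq,
      Matrix.zero_apply]

end JordanNilpotent

section FixedForm

variable {K : Type*} [Field K] {n k : ℕ} (lam : Fin k → ℕ) (hn : ∑ r, lam r = n)

def fixedFormEntry (c : Fin k → Fin k → ℕ → K) (r s : Fin k) (p q : ℕ) : K :=
  if r = s then
    (if Even (p + q) ∧ p + q + 1 ≤ lam r then (-1 : K) ^ p * c r r ((p + q) / 2 + 1) else 0)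
  else
    (if p + q + 1 ≤ lam s then (-1 : K) ^ p * c r s (p + q + 1) else 0)

/-- The coefficient `c^{r,s}_m` read off the first row of the `(r, s)` block, whose entries
depend only on `p + q`: `p + q = 2m - 2` on diagonal blocks and `p + q = m - 1` off them. -/
def blockCoeff (A : Matrix (Fin n) (Fin n) K) (r s : Fin k) (m : ℕ) : K :=
  if r = s then blockEntry lam hn A r r 0 (2 * m - 2) else blockEntry lam hn A r s 0 (m - 1)

variable {A : Matrix (Fin n) (Fin n) K} {r s : Fin k}

theorem apply_blockIdx_eq_fixedFormEntry [CharZero K] (hA : A.IsSymm)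
    (hrec : ∀ p q, p < lam r → q < lam s →
      blockEntry lam hn A r s (p + 1) q + blockEntry lam hn A r s p (q + 1) = 0)
    {p q : ℕ} (hp : p < lam r) (hq : q < lam s) :
    A (blockIdx lam hn r p hp) (blockIdx lam hn s q hq) =
      fixedFormEntry lam (blockCoeff lam hn A) r s p q := by
  have hvanish : ∀ p q, lam s ≤ q → blockEntry lam hn A r s p q = 0 :=
    fun _ _ => blockEntry_of_le_right lam hn
  have key := eq_neg_one_pow_mul_of_add_eq_zero hvanish hrec p hp.le q
  rw [blockEntry_of_lt lam hn hp hq] at key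
  rw [key, fixedFormEntry]
  simp only [blockCoeff]
  split_ifs with hrs hc hle
  · subst hrs
    rw [show 2 * ((p + q) / 2 + 1) - 2 = p + q by obtain ⟨t, ht⟩ := hc.1; omega]
  · subst hrs
    rcases lt_or_ge (p + q) (lam r) with hlt | hge
    · have hodd : Odd (p + q) := Nat.not_even_iff_odd.1 fun h => hc ⟨h, hlt⟩
      rw [eq_zero_of_odd_of_add_eq_zero hvanish hrec
        (fun _ => blockEntry_comm lam hn hA) hodd, mul_zero]
    · rw [hvanish 0 _ hge, mul_zero]
  · rw [Nat.add_sub_cancel]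
  · rw [hvanish 0 _ (by omega), mul_zero]

theorem blockEntry_add_eq_zero_of_fixedFormEntry (hsr : lam s ≤ lam r)
    {c : Fin k → Fin k → ℕ → K}
    (hc : ∀ p q, ∀ hp : p < lam r, ∀ hq : q < lam s,
      A (blockIdx lam hn r p hp) (blockIdx lam hn s q hq) = fixedFormEntry lam c r s p q) :
    ∀ p q, p < lam r → q < lam s →
      blockEntry lam hn A r s (p + 1) q + blockEntry lam hn A r s p (q + 1) = 0 := by
  let g : ℕ → K := fun m =>
    if r = s then (if Even m ∧ m + 1 ≤ lam r then c r r (m / 2 + 1) else 0)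
    else (if m + 1 ≤ lam s then c r s (m + 1) else 0)
  refine add_eq_zero_of_eq_neg_one_pow_mul hsr (fun _ _ => blockEntry_of_le_left lam hn)
    (fun _ _ => blockEntry_of_le_right lam hn) (g := g) ?_ ?_
  · intro m hm
    simp only [g]
    split_ifs <;> first | rfl | (subst_vars; omega)
  · intro p q hp hq
    rw [blockEntry_of_lt lam hn hp hq, hc, fixedFormEntry]
    simp only [g]
    split_ifs <;> simp

end FixedForm

theorem jordan_fixed_form_general (K : Type*) [Field K] [CharZero K] (n k : ℕ)
    (lam : Fin k → ℕ) (hmono : Antitone lam)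
    (hn : ∑ r, lam r = n) (A : Matrix (Fin n) (Fin n) K) (hA : A.IsSymm) :
    jordanNilpotent K n k lam * A + A * (jordanNilpotent K n k lam)ᵀ = 0 ↔
      ∃ c : Fin k → Fin k → ℕ → K, ∀ r s : Fin k, r ≤ s →
        ∀ p q : ℕ, ∀ hp : p < lam r, ∀ hq : q < lam s,
          A (blockIdx lam hn r p hp) (blockIdx lam hn s q hq) =
            if r = s then
              (if Even (p + q) ∧ p + q + 1 ≤ lam r then
                (-1 : K) ^ p * c r r ((p + q) / 2 + 1) else 0)
            else
              (if p + q + 1 ≤ lam s then (-1 : K) ^ p * c r s (p + q + 1) else 0) := by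
  rw [jordanNilpotent_commutator_eq_zero_iff lam hn]
  constructor
  · intro hrec
    exact ⟨blockCoeff lam hn A, fun r s _ p q hp hq =>
      apply_blockIdx_eq_fixedFormEntry lam hn hA (hrec r s) hp hq⟩
  · rintro ⟨c, hc⟩ r s
    rcases le_total r s with hrs | hsr
    · exact blockEntry_add_eq_zero_of_fixedFormEntry lam hn (hmono hrs) (hc r s hrs)
    · intro p q hp hq
      rw [← blockEntry_comm lam hn hA, ← blockEntry_comm lam hn hA (r := r), add_comm]
      exact blockEntry_add_eq_zero_of_fixedFormEntry lam hn (hmono hsr) (hc s r hsr) q p hq hp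

/-- A symmetric matrix `A` satisfies `N_λ * A + A * N_λᵀ = 0` iff its blocks have the
explicit form of the paper: for `r ≤ s` and positions `p, q` (0-indexed) inside the
`(r, s)` block, the entry is `(-1)^p * c^{r,r}_{(p+q)/2+1}` (when `p + q` is even and
`p + q + 1 ≤ λ_r`, else `0`) on diagonal blocks, and `(-1)^p * c^{r,s}_{p+q+1}` (when
`p + q + 1 ≤ λ_s`, else `0`) on off-diagonal blocks; entries with `r > s` are determined
by symmetry. -/
theorem jordan_fixed_form (K : Type*) [Field K] [CharZero K] (n k : ℕ)
    (lam : Fin k → ℕ) (hpos : ∀ r, 1 ≤ lam r) (hmono : Antitone lam)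
    (hn : ∑ r, lam r = n) (A : Matrix (Fin n) (Fin n) K) (hA : A.IsSymm) :
    jordanNilpotent K n k lam * A + A * (jordanNilpotent K n k lam)ᵀ = 0 ↔
      ∃ c : Fin k → Fin k → ℕ → K, ∀ r s : Fin k, r ≤ s →
        ∀ p q : ℕ, ∀ hp : p < lam r, ∀ hq : q < lam s,
          A (blockIdx lam hn r p hp) (blockIdx lam hn s q hq) =
            if r = s then
              (if Even (p + q) ∧ p + q + 1 ≤ lam r then
                (-1 : K) ^ p * c r r ((p + q) / 2 + 1) else 0)
            else
              (if p + q + 1 ≤ lam s then (-1 : K) ^ p * c r s (p + q + 1) else 0) :=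
  jordan_fixed_form_general K n k lam hmono hn A hA
end

section
/- Let A be a symmetric n×n matrix over K with N_λ·A + A·N_λᵀ = 0. Let D₁(A) be the k×k matrix whose (r,s) entry is the (s_r + 1, s_s + λ_s) entry of A, and let D₂(A) be the (n−k)×(n−k) submatrix of A obtained by deleting, for each 1 ≤ r ≤ k, row s_r + 1 and column s_r + λ_r. Then det(A) = (−1)^{n−k} · det(D₁(A)) · det(D₂(A)). -/
/-!
Reorder the rows of `A` as (block starts, the rest) and its columns as (block ends, the rest).
Entrywise, `N A + A Nᵀ = 0` reads `[i not an end] A (i+1) j + [j not an end] A i (j+1) = 0`, so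
`A i j = 0` whenever `i` is not a block start and `j` is a block end: the reordered matrix is
block upper triangular with diagonal blocks `D₁(A)` and `D₂(A)`. The two reorderings differ by
the permutation rotating every block cyclically, whose sign is `∏ (-1)^(λ_r - 1) = (-1)^(n-k)`.
-/

open Matrix

open Equiv

theorem Equiv.Perm.sign_sigmaCongrRight_mulSingle {α : Type*} {β : α → Type*} [DecidableEq α]
    [Fintype α] [∀ a, Fintype (β a)] [∀ a, DecidableEq (β a)] (a : α) (τ : Perm (β a)) :
    Perm.sign (Perm.sigmaCongrRight (Pi.mulSingle a τ)) = Perm.sign τ := by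
  let fib : β a ≃ {x : Σ a, β a // x.1 = a} :=
    { toFun := fun b => ⟨⟨a, b⟩, rfl⟩
      invFun := fun x => x.2 ▸ x.1.2
      left_inv := fun _ => rfl
      right_inv := by rintro ⟨⟨a', b⟩, rfl⟩; rfl }
  suffices Perm.sigmaCongrRight (Pi.mulSingle a τ) = τ.extendDomain fib by
    rw [this, Perm.sign_extendDomain]
  ext1 ⟨a', b⟩
  by_cases h : a' = a
  · subst h
    rw [show (⟨a', b⟩ : Σ a, β a) = fib b from rfl, Perm.extendDomain_apply_image]
    simp [fib]
  · rw [Perm.extendDomain_apply_not_subtype τ fib h]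
    change (⟨a', (Pi.mulSingle (M := fun a => Perm (β a)) a τ a') b⟩ : Σ a, β a) = _
    rw [Pi.mulSingle_eq_of_ne h]
    rfl

theorem Equiv.Perm.sign_sigmaCongrRight {α : Type*} {β : α → Type*} [DecidableEq α]
    [Fintype α] [∀ a, Fintype (β a)] [∀ a, DecidableEq (β a)] (σ : ∀ a, Perm (β a)) :
    Perm.sign (Perm.sigmaCongrRight σ) = ∏ a, Perm.sign (σ a) := by
  have hσ := Finset.univ.map_noncommProd (fun a => Pi.mulSingle a (σ a))
    (fun a _ b _ _ => Pi.mulSingle_apply_commute σ a b)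
    (Perm.sign.comp (Perm.sigmaCongrRightHom β))
  rw [Finset.noncommProd_mulSingle, Finset.noncommProd_eq_prod] at hσ
  simpa only [MonoidHom.comp_apply, Perm.sigmaCongrRightHom_apply,
    Perm.sign_sigmaCongrRight_mulSingle] using hσ

theorem Fin.val_finRotate {m : ℕ} (i : Fin m) :
    (finRotate m i : ℕ) = if (i : ℕ) + 1 = m then 0 else (i : ℕ) + 1 := by
  cases m with
  | zero => exact i.elim0
  | succ m => simp only [coe_finRotate, Fin.ext_iff, Fin.val_last, Nat.add_right_cancel_iff]

theorem Matrix.det_submatrix_perm_comp_equiv {m n R : Type*} [Fintype m] [DecidableEq m]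
    [Fintype n] [DecidableEq n] [CommRing R] (M : Matrix n n R) (σ : Perm n) (e : m ≃ n) :
    (M.submatrix (σ ∘ e) e).det = Perm.sign σ * M.det := by
  rw [show M.submatrix (σ ∘ e) e = (M.submatrix σ id).submatrix e e from rfl,
    det_submatrix_equiv_self, det_permute]

theorem Matrix.det_submatrix_sumElim_of_eq_zero {l m n R : Type*} [Fintype l]
    [DecidableEq l] [Fintype m] [DecidableEq m] [CommRing R] (M : Matrix n n R)
    (ρ₁ κ₁ : l → n) (ρ₂ κ₂ : m → n) (h : ∀ x s, M (ρ₂ x) (κ₁ s) = 0) :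
    (M.submatrix (Sum.elim ρ₁ ρ₂) (Sum.elim κ₁ κ₂)).det =
      (M.submatrix ρ₁ κ₁).det * (M.submatrix ρ₂ κ₂).det := by
  have hM : M.submatrix (Sum.elim ρ₁ ρ₂) (Sum.elim κ₁ κ₂) =
      fromBlocks (M.submatrix ρ₁ κ₁) (M.submatrix ρ₁ κ₂) 0
        (M.submatrix ρ₂ κ₂) := by
    ext (x | x) (s | s)
    exacts [rfl, rfl, h x s, rfl]
  rw [hM, det_fromBlocks_zero₂₁]

variable {n k : ℕ}

def IsBlockStart (lam : Fin k → ℕ) (i : Fin n) : Prop := ∃ r, (i : ℕ) = psum lam r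

def IsBlockEnd (lam : Fin k → ℕ) (j : Fin n) : Prop := ∃ r, (j : ℕ) = psum lam r + lam r - 1

theorem sum_castLE_eq_psum (lam : Fin k → ℕ) (r : Fin k) :
    ∑ i : Fin r, lam (Fin.castLE r.2.le i) = psum lam r := by
  refine Finset.sum_bij (fun i _ => Fin.castLE r.2.le i) ?_ ?_ ?_ ?_
  · intro i _
    simp only [Finset.mem_filter, Finset.mem_univ, true_and, Fin.lt_def, Fin.val_castLE]
    exact i.2
  · intro i _ j _ h
    simpa [Fin.ext_iff] using h
  · intro t ht
    simp only [Finset.mem_filter, Finset.mem_univ, true_and, Fin.lt_def] at ht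
    exact ⟨⟨t, ht⟩, Finset.mem_univ _, rfl⟩
  · intros
    rfl

section blocks

variable (lam : Fin k → ℕ) (hn : ∑ r, lam r = n)

def blockEquiv : (Σ r, Fin (lam r)) ≃ Fin n := finSigmaFinEquiv.trans (finCongr hn)

theorem val_blockEquiv (x : Σ r, Fin (lam r)) :
    (blockEquiv lam hn x : ℕ) = psum lam x.1 + x.2 := by
  rw [blockEquiv, Equiv.trans_apply, finCongr_apply, Fin.val_cast, finSigmaFinEquiv_apply,
    sum_castLE_eq_psum]

theorem blockIdx_eq_blockEquiv (r : Fin k) (p : ℕ) (hp : p < lam r) :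
    blockIdx lam hn r p hp = blockEquiv lam hn ⟨r, ⟨p, hp⟩⟩ :=
  Fin.ext (val_blockEquiv lam hn ⟨r, ⟨p, hp⟩⟩).symm

theorem eq_fst_of_mem_block {x : Σ r, Fin (lam r)} {r : Fin k}
    (h₁ : psum lam r ≤ blockEquiv lam hn x)
    (h₂ : (blockEquiv lam hn x : ℕ) < psum lam r + lam r) : r = x.1 := by
  have hx : (blockEquiv lam hn ⟨r, ⟨blockEquiv lam hn x - psum lam r, by omega⟩⟩ : ℕ) =
      blockEquiv lam hn x := by
    rw [val_blockEquiv]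
    dsimp only
    omega
  exact congrArg Sigma.fst ((blockEquiv lam hn).injective (Fin.ext hx))

variable {lam}

theorem isBlockStart_blockEquiv_iff (hpos : ∀ r, 1 ≤ lam r) (x : Σ r, Fin (lam r)) :
    IsBlockStart lam (blockEquiv lam hn x) ↔ (x.2 : ℕ) = 0 := by
  constructor
  · rintro ⟨r, hr⟩
    obtain rfl := eq_fst_of_mem_block lam hn (x := x) (r := r) (by omega) (by have := hpos r; omega)
    rw [val_blockEquiv] at hr
    omega
  · exact fun h => ⟨x.1, by rw [val_blockEquiv, h, add_zero]⟩

theorem isBlockEnd_blockEquiv_iff (hpos : ∀ r, 1 ≤ lam r) (x : Σ r, Fin (lam r)) :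
    IsBlockEnd lam (blockEquiv lam hn x) ↔ (x.2 : ℕ) + 1 = lam x.1 := by
  constructor
  · rintro ⟨r, hr⟩
    have := hpos r
    obtain rfl := eq_fst_of_mem_block lam hn (x := x) (r := r) (by omega) (by omega)
    rw [val_blockEquiv] at hr
    omega
  · exact fun h => ⟨x.1, by rw [val_blockEquiv]; omega⟩

end blocks

section rotation

variable (lam : Fin k → ℕ) (hn : ∑ r, lam r = n)

def blockRotate : Perm (Fin n) :=
  (blockEquiv lam hn).permCongr (Perm.sigmaCongrRight fun r => finRotate (lam r))

theorem blockRotate_blockEquiv (x : Σ r, Fin (lam r)) :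
    blockRotate lam hn (blockEquiv lam hn x) = blockEquiv lam hn ⟨x.1, finRotate _ x.2⟩ := by
  simp [blockRotate, Equiv.permCongr_apply]

variable {lam}

theorem sign_blockRotate (hpos : ∀ r, 1 ≤ lam r) :
    Perm.sign (blockRotate lam hn) = (-1) ^ (n - k) := by
  have hsum : ∑ r, (lam r - 1) = n - k := by
    have h : ∑ r, (lam r - 1 + 1) = n :=
      hn ▸ Finset.sum_congr rfl fun r _ => by have := hpos r; omega
    rw [Finset.sum_add_distrib, Finset.sum_const, Finset.card_univ, Fintype.card_fin,
      smul_eq_mul, mul_one] at h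
    omega
  rw [blockRotate, Perm.sign_permCongr, Perm.sign_sigmaCongrRight]
  simp only [sign_finRotate]
  rw [Finset.prod_pow_eq_pow_sum, hsum]

theorem val_blockRotate_of_not_isBlockEnd (hpos : ∀ r, 1 ≤ lam r) {j : Fin n}
    (hj : ¬IsBlockEnd lam j) : (blockRotate lam hn j : ℕ) = j + 1 := by
  obtain ⟨x, rfl⟩ := (blockEquiv lam hn).surjective j
  rw [isBlockEnd_blockEquiv_iff hn hpos] at hj
  rw [blockRotate_blockEquiv, val_blockEquiv, val_blockEquiv]
  dsimp only
  rw [Fin.val_finRotate, if_neg hj, add_assoc]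

theorem isBlockStart_blockRotate_iff (hpos : ∀ r, 1 ≤ lam r) (j : Fin n) :
    IsBlockStart lam (blockRotate lam hn j) ↔ IsBlockEnd lam j := by
  obtain ⟨x, rfl⟩ := (blockEquiv lam hn).surjective j
  rw [blockRotate_blockEquiv, isBlockStart_blockEquiv_iff hn hpos,
    isBlockEnd_blockEquiv_iff hn hpos, Fin.val_finRotate]
  split_ifs with h <;> simp [h]

theorem blockRotate_blockIdx_last (s : Fin k) (hl : lam s - 1 < lam s) (h0 : 0 < lam s) :
    blockRotate lam hn (blockIdx lam hn s (lam s - 1) hl) = blockIdx lam hn s 0 h0 := by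
  rw [blockIdx_eq_blockEquiv, blockIdx_eq_blockEquiv, blockRotate_blockEquiv]
  congr
  ext
  rw [Fin.val_finRotate, if_pos (by dsimp only; omega)]

end rotation

section jordan

variable {K : Type*} [Field K] {lam : Fin k → ℕ}

theorem exists_block_add_two_le_iff (hn : ∑ r, lam r = n) (hpos : ∀ r, 1 ≤ lam r)
    (j : Fin n) :
    (∃ r, psum lam r ≤ j ∧ (j : ℕ) + 2 ≤ psum lam r + lam r) ↔ ¬IsBlockEnd lam j := by
  obtain ⟨x, rfl⟩ := (blockEquiv lam hn).surjective j
  rw [isBlockEnd_blockEquiv_iff hn hpos]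
  constructor
  · rintro ⟨r, h₁, h₂⟩
    obtain rfl := eq_fst_of_mem_block lam hn h₁ (by omega)
    rw [val_blockEquiv] at h₂
    omega
  · intro h
    refine ⟨x.1, ?_, ?_⟩ <;> rw [val_blockEquiv] <;> omega

theorem jordanNilpotent_apply_of_isBlockEnd (hn : ∑ r, lam r = n) (hpos : ∀ r, 1 ≤ lam r)
    {j : Fin n} (hj : IsBlockEnd lam j) (l : Fin n) : jordanNilpotent K n k lam j l = 0 :=
  if_neg fun h => (exists_block_add_two_le_iff hn hpos j).mp h.2 hj

theorem jordanNilpotent_apply_of_not_isBlockEnd (hn : ∑ r, lam r = n) (hpos : ∀ r, 1 ≤ lam r)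
    {j : Fin n} (hj : ¬IsBlockEnd lam j) (l : Fin n) :
    jordanNilpotent K n k lam j l = if l = blockRotate lam hn j then 1 else 0 := by
  simp only [jordanNilpotent, of_apply, (exists_block_add_two_le_iff hn hpos j).mpr hj, and_true,
    Fin.ext_iff, val_blockRotate_of_not_isBlockEnd hn hpos hj]

theorem jordanNilpotent_mul_apply_of_not_isBlockEnd (hn : ∑ r, lam r = n)
    (hpos : ∀ r, 1 ≤ lam r) (A : Matrix (Fin n) (Fin n) K) {j : Fin n} (hj : ¬IsBlockEnd lam j)
    (c : Fin n) : (jordanNilpotent K n k lam * A) j c = A (blockRotate lam hn j) c := by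
  simp [mul_apply, jordanNilpotent_apply_of_not_isBlockEnd hn hpos hj]

theorem mul_transpose_jordanNilpotent_apply_of_isBlockEnd (hn : ∑ r, lam r = n)
    (hpos : ∀ r, 1 ≤ lam r) (A : Matrix (Fin n) (Fin n) K) (i : Fin n) {c : Fin n}
    (hc : IsBlockEnd lam c) : (A * (jordanNilpotent K n k lam)ᵀ) i c = 0 := by
  simp [mul_apply, jordanNilpotent_apply_of_isBlockEnd hn hpos hc]

theorem apply_eq_zero_of_not_isBlockStart_of_isBlockEnd (hn : ∑ r, lam r = n)
    (hpos : ∀ r, 1 ≤ lam r) {A : Matrix (Fin n) (Fin n) K}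
    (hfix : jordanNilpotent K n k lam * A + A * (jordanNilpotent K n k lam)ᵀ = 0)
    {i j : Fin n} (hi : ¬IsBlockStart lam i) (hj : IsBlockEnd lam j) : A i j = 0 := by
  set i' := (blockRotate lam hn).symm i
  have hi' : ¬IsBlockEnd lam i' := by
    rwa [← isBlockStart_blockRotate_iff hn hpos, Equiv.apply_symm_apply]
  have := congrFun₂ hfix i' j
  rwa [Matrix.add_apply, jordanNilpotent_mul_apply_of_not_isBlockEnd hn hpos A hi',
    mul_transpose_jordanNilpotent_apply_of_isBlockEnd hn hpos A i' hj, Equiv.apply_symm_apply,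
    add_zero] at this

end jordan

section enumerations

variable {lam : Fin k → ℕ} {m : ℕ}

theorem eq_blockRotate_comp (hn : ∑ r, lam r = n) (hpos : ∀ r, 1 ≤ lam r)
    {e f : Fin m → Fin n} (he : StrictMono e) (hf : StrictMono f)
    (hre : ∀ i, (∃ x, e x = i) ↔ ¬IsBlockStart lam i)
    (hrf : ∀ j, (∃ x, f x = j) ↔ ¬IsBlockEnd lam j) : e = blockRotate lam hn ∘ f := by
  have hval : ∀ x, (blockRotate lam hn (f x) : ℕ) = f x + 1 := fun x =>
    val_blockRotate_of_not_isBlockEnd hn hpos ((hrf _).mp ⟨x, rfl⟩)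
  have hmono : StrictMono (blockRotate lam hn ∘ f) := fun a b hab => by
    have := hf hab
    rw [Fin.lt_def] at this ⊢
    simp only [Function.comp_apply, hval]
    omega
  refine (he.range_inj hmono).mp (Set.ext fun i => ?_)
  rw [Set.mem_range, hre, Set.range_comp, Set.mem_image_equiv, Set.mem_range, hrf,
    ← isBlockStart_blockRotate_iff hn hpos, Equiv.apply_symm_apply]

theorem sumElim_blockIdx_last_bijective (hn : ∑ r, lam r = n) (hpos : ∀ r, 1 ≤ lam r)
    {f : Fin m → Fin n} (hf : Function.Injective f)
    (hrf : ∀ j, (∃ x, f x = j) ↔ ¬IsBlockEnd lam j) :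
    Function.Bijective
      (Sum.elim (fun s => blockIdx lam hn s (lam s - 1) (Nat.sub_lt (hpos s) Nat.one_pos))
        f) := by
  have hend (s) :
      IsBlockEnd lam (blockIdx lam hn s (lam s - 1) (Nat.sub_lt (hpos s) Nat.one_pos)) :=
    ⟨s, by have := hpos s; dsimp [blockIdx]; omega⟩
  constructor
  · rintro (r | x) (s | y) h
    · simp only [Sum.elim_inl, blockIdx_eq_blockEquiv] at h
      obtain rfl : r = s := congrArg Sigma.fst ((blockEquiv lam hn).injective h)
      rfl
    · exact absurd (hend r) ((hrf _).mp ⟨y, h.symm⟩)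
    · exact absurd (hend s) ((hrf _).mp ⟨x, h⟩)
    · rw [hf h]
  · intro j
    by_cases hj : IsBlockEnd lam j
    · obtain ⟨s, hs⟩ := hj
      exact ⟨Sum.inl s, Fin.ext (by have := hpos s; dsimp [blockIdx]; omega)⟩
    · obtain ⟨x, rfl⟩ := (hrf j).mpr hj
      exact ⟨Sum.inr x, rfl⟩

end enumerations

/-- Rows `s_r` and columns `s_r + λ_r - 1` are 0-indexed; `e` and `f` enumerate the remaining
rows and columns increasingly. -/
theorem det_factorization_general (K : Type*) [Field K] (n k : ℕ)
    (lam : Fin k → ℕ) (hpos : ∀ r, 1 ≤ lam r)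
    (hn : ∑ r, lam r = n) (A : Matrix (Fin n) (Fin n) K)
    (hfix : jordanNilpotent K n k lam * A + A * (jordanNilpotent K n k lam)ᵀ = 0)
    (e f : Fin (n - k) → Fin n) (he : StrictMono e) (hf : StrictMono f)
    (hre : ∀ i : Fin n, (∃ x, e x = i) ↔ ¬∃ r : Fin k, (i : ℕ) = psum lam r)
    (hrf : ∀ j : Fin n, (∃ x, f x = j) ↔ ¬∃ r : Fin k, (j : ℕ) = psum lam r + lam r - 1) :
    A.det =
      (-1 : K) ^ (n - k) *
        (Matrix.of fun r s : Fin k =>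
            A (blockIdx lam hn r 0 (hpos r))
              (blockIdx lam hn s (lam s - 1) (Nat.sub_lt (hpos s) Nat.one_pos))).det *
        (A.submatrix e f).det := by
  let start r := blockIdx lam hn r 0 (hpos r)
  let last s := blockIdx lam hn s (lam s - 1) (Nat.sub_lt (hpos s) Nat.one_pos)
  let κ := Equiv.ofBijective (Sum.elim last f)
    (sumElim_blockIdx_last_bijective hn hpos hf.injective hrf)
  have hρ : Sum.elim start e = blockRotate lam hn ∘ κ := by
    ext1 (r | x)
    · exact (blockRotate_blockIdx_last hn r (Nat.sub_lt (hpos r) Nat.one_pos) (hpos r)).symm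
    · exact congrFun (eq_blockRotate_comp hn hpos he hf hre hrf) x
  have hzero : ∀ x s, A (e x) (last s) = 0 := fun x s =>
    apply_eq_zero_of_not_isBlockStart_of_isBlockEnd hn hpos hfix ((hre _).mp ⟨x, rfl⟩)
      ⟨s, by have := hpos s; dsimp [last, blockIdx]; omega⟩
  have hdet := det_submatrix_perm_comp_equiv A (blockRotate lam hn) κ
  rw [← hρ, Equiv.coe_ofBijective, det_submatrix_sumElim_of_eq_zero A start last e f hzero,
    sign_blockRotate hn hpos] at hdet
  push_cast at hdet
  calc A.det = (-1 : K) ^ (n - k) * ((-1) ^ (n - k) * A.det) := by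
        rw [← mul_assoc, ← mul_pow, neg_one_mul, neg_neg, one_pow, one_mul]
    _ = _ := by rw [← hdet]; exact (mul_assoc _ _ _).symm

/-- The determinant factorization `det A = (-1)^(n-k) · det D₁(A) · det D₂(A)`, where
`D₁(A)` is the `k × k` matrix of top-right entries of the blocks of `A`, and `D₂(A)` is the
submatrix of `A` obtained by deleting the top row and the rightmost column of every diagonal
block (the deleted rows are indexed by `s_r` and the deleted columns by `s_r + λ_r - 1`,
0-indexed; `e` and `f` are the monotone enumerations of the remaining rows and columns). -/
theorem det_factorization (K : Type*) [Field K] [CharZero K] (n k : ℕ)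
    (lam : Fin k → ℕ) (hpos : ∀ r, 1 ≤ lam r) (hmono : Antitone lam)
    (hn : ∑ r, lam r = n) (A : Matrix (Fin n) (Fin n) K) (hA : A.IsSymm)
    (hfix : jordanNilpotent K n k lam * A + A * (jordanNilpotent K n k lam)ᵀ = 0)
    (e f : Fin (n - k) → Fin n) (he : StrictMono e) (hf : StrictMono f)
    (hre : ∀ i : Fin n, (∃ x, e x = i) ↔ ¬∃ r : Fin k, (i : ℕ) = psum lam r)
    (hrf : ∀ j : Fin n, (∃ x, f x = j) ↔ ¬∃ r : Fin k, (j : ℕ) = psum lam r + lam r - 1) :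
    A.det =
      (-1 : K) ^ (n - k) *
        (Matrix.of fun r s : Fin k =>
            A (blockIdx lam hn r 0 (hpos r))
              (blockIdx lam hn s (lam s - 1) (Nat.sub_lt (hpos s) Nat.one_pos))).det *
        (A.submatrix e f).det :=
  det_factorization_general K n k lam hpos hn A hfix e f he hf hre hrf
end
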